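/- Let H be the supercommutative bialgebra over R with basis 1, d where d² = 0, Δ(d) = d⊗1 + 1⊗d, and d of odd degree. For any supercommutative R-algebra M, the universal measuring algebra H(M) (in the supercommutative setting) is isomorphic to the algebra of Kähler differential forms Ω*(M) over M, with d acting as the de Rham differential. -/

import Mathlib

open TensorProduct

/-!
An algebra map `f : M → A` into the even part of a supercommutative algebra is central, so it
makes `A` an `M`-algebra and an odd derivation `D' : M → A` becomes an `R`-derivation. It factors
through `Ω¹_{M/R}`, its values are odd and hence square to zero, so the universal property of the
exterior algebra extends it to `Ω*(M) → A`. Uniqueness holds because `Ω*(M)` is generated by `M`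
and the `dm`.
-/

theorem commute_of_forall_homogeneous {ι σ A : Type*} [DecidableEq ι] [Ring A] [SetLike σ A]
    [AddSubmonoidClass σ A] (𝒜 : ι → σ) [DirectSum.Decomposition 𝒜] {a : A}
    (ha : ∀ i, ∀ b ∈ 𝒜 i, Commute a b) (b : A) : Commute a b := by
  induction b using DirectSum.Decomposition.inductionOn 𝒜 with
  | zero => exact Commute.zero_right a
  | homogeneous b => exact ha _ b b.2
  | add x y hx hy => exact hx.add_right hy

theorem Derivation.liftKaehlerDifferential_mem {R S N : Type*} [CommRing R] [CommRing S]
    [Algebra R S] [AddCommGroup N] [Module R N] [Module S N] [IsScalarTower R S N]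
    (D : Derivation R S N) (p : Submodule S N) (hp : ∀ s, D s ∈ p) (x : Ω[S⁄R]) :
    D.liftKaehlerDifferential x ∈ p := by
  have hx : x ∈ Submodule.span S (Set.range (KaehlerDifferential.D R S)) := by
    rw [KaehlerDifferential.span_range_derivation]; trivial
  rw [← Submodule.mem_comap]
  refine Submodule.span_le.mpr ?_ hx
  rintro _ ⟨s, rfl⟩
  simpa using hp s

theorem ExteriorAlgebra.ι_D_mul (R M : Type*) [CommRing R] [CommRing M] [Algebra R M]
    (m n : M) :
    ι M (KaehlerDifferential.D R M (m * n))
      = ι M (KaehlerDifferential.D R M m) * algebraMap M (ExteriorAlgebra M (Ω[M⁄R])) n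
        + algebraMap M (ExteriorAlgebra M (Ω[M⁄R])) m * ι M (KaehlerDifferential.D R M n) := by
  rw [Derivation.leibniz, map_add, map_smul, map_smul, Algebra.smul_def, Algebra.smul_def,
    ← Algebra.commutes n, add_comm]

theorem ExteriorAlgebra.ringHom_ext_of_span_eq_top {R N A : Type*} [CommRing R] [AddCommGroup N]
    [Module R N] [Ring A] {s : Set N} (hs : Submodule.span R s = ⊤)
    {g₁ g₂ : ExteriorAlgebra R N →+* A}
    (halg : ∀ r, g₁ (algebraMap R _ r) = g₂ (algebraMap R _ r))
    (hι : ∀ x ∈ s, g₁ (ι R x) = g₂ (ι R x)) : g₁ = g₂ := by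
  have hι' : ∀ x, g₁ (ι R x) = g₂ (ι R x) := by
    intro x
    induction hs.ge (Submodule.mem_top : x ∈ ⊤) using Submodule.span_induction with
    | mem x hx => exact hι x hx
    | zero => simp only [map_zero]
    | add x y _ _ hx hy => simp only [map_add, hx, hy]
    | smul r x _ hx => rw [map_smul, Algebra.smul_def, map_mul, map_mul, halg, hx]
  ext a
  induction a using ExteriorAlgebra.induction with
  | algebraMap r => exact halg r
  | ι x => exact hι' x
  | mul x y hx hy => rw [map_mul, map_mul, hx, hy]
  | add x y hx hy => rw [map_add, map_add, hx, hy]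

theorem differential_forms_universal (R M : Type) [CommRing R] [CommRing M]
    [Algebra R M] :
    -- the structure map of `Ω*(M)` satisfies the measuring (Leibniz) identity
    (∀ m n : M,
      ExteriorAlgebra.ι M (KaehlerDifferential.D R M (m * n))
        = ExteriorAlgebra.ι M (KaehlerDifferential.D R M m)
            * algebraMap M (ExteriorAlgebra M (Ω[M⁄R])) n
          + algebraMap M (ExteriorAlgebra M (Ω[M⁄R])) m
            * ExteriorAlgebra.ι M (KaehlerDifferential.D R M n)) ∧
    -- universality of `Ω*(M)` among supercommutative algebras
    (∀ (A : Type) [Ring A] [Algebra R A] (𝒜 : ZMod 2 → AddSubgroup A),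
      ∀ [GradedRing 𝒜],
      (∀ (i j : ZMod 2) (a b : A), a ∈ 𝒜 i → b ∈ 𝒜 j →
        a * b = ((-1 : ℤ) ^ (i.val * j.val)) • (b * a)) →
      (∀ a : A, a ∈ 𝒜 1 → a * a = 0) →
      ∀ (f : M →ₐ[R] A), (∀ m : M, f m ∈ 𝒜 0) →
      ∀ (D' : M →ₗ[R] A), (∀ m : M, D' m ∈ 𝒜 1) →
      (∀ m n : M, D' (m * n) = D' m * f n + f m * D' n) →
      ∃! g : ExteriorAlgebra M (Ω[M⁄R]) →+* A,
        (∀ m : M, g (algebraMap M (ExteriorAlgebra M (Ω[M⁄R])) m) = f m) ∧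
        (∀ m : M, g (ExteriorAlgebra.ι M (KaehlerDifferential.D R M m)) = D' m)) := by
  refine ⟨ExteriorAlgebra.ι_D_mul R M, ?_⟩
  intro A _ _ 𝒜 _ hcomm hsq f hf0 D' hD1 hleib
  have hcentral (m : M) (a : A) : f m * a = a * f m :=
    commute_of_forall_homogeneous 𝒜
      (fun j b hb => by simpa [Commute, SemiconjBy] using hcomm 0 j _ b (hf0 m) hb) a
  let : Algebra M A := RingHom.toAlgebra' f.toRingHom hcentral
  have : IsScalarTower R M A := .of_algebraMap_eq fun r => (f.commutes r).symm
  let D : Derivation R M A := .mk' D' fun m n => by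
    rw [hleib, Algebra.smul_def, Algebra.smul_def, ← hcentral n, add_comm]; rfl
  let odd : Submodule M A :=
    { toAddSubmonoid := (𝒜 1).toAddSubmonoid
      smul_mem' := fun m a ha => zero_add (1 : ZMod 2) ▸ SetLike.mul_mem_graded (hf0 m) ha }
  let G := ExteriorAlgebra.lift M ⟨D.liftKaehlerDifferential,
    fun x => hsq _ (D.liftKaehlerDifferential_mem odd hD1 x)⟩
  have hG (m : M) : G (ExteriorAlgebra.ι M (KaehlerDifferential.D R M m)) = D' m := by
    rw [ExteriorAlgebra.lift_ι_apply]; exact D.liftKaehlerDifferential_comp_D m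
  refine ⟨G.toRingHom, ⟨G.commutes, hG⟩, fun g ⟨hg₁, hg₂⟩ => ?_⟩
  refine ExteriorAlgebra.ringHom_ext_of_span_eq_top (KaehlerDifferential.span_range_derivation R M)
    (fun m => (hg₁ m).trans (G.commutes m).symm) ?_
  rintro _ ⟨m, rfl⟩
  exact (hg₂ m).trans (hG m).symm
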